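/- Let Π_A = Σ_{i<j} |Ψ⁻_{ij}⟩⟨Ψ⁻_{ij}| be the projection onto the antisymmetric subspace of ℂᵈ ⊗ ℂᵈ, where |Ψ⁻_{ij}⟩ = (|ij⟩ − |ji⟩)/√2. If ρ is a separable state on ℂᵈ ⊗ ℂᵈ, then Tr(ρ Π_A) ≤ 1/2. -/

import Mathlib

open Matrix

section Helpers

private lemma sep_full_sum (d : ℕ) (a b : Fin d → ℂ)
    (ha : ∑ i, Complex.normSq (a i) = 1) (hb : ∑ j, Complex.normSq (b j) = 1) :
    ∑ i, ∑ j, Complex.normSq (a i * b j - a j * b i) ≤ 2 := by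
  have expand : ∀ i j : Fin d, Complex.normSq (a i * b j - a j * b i)
      = Complex.normSq (a i) * Complex.normSq (b j)
        + Complex.normSq (a j) * Complex.normSq (b i)
        - 2 * ((a i * b j) * starRingEnd ℂ (a j * b i)).re := by
    intro i j
    rw [Complex.normSq_sub, Complex.normSq_mul, Complex.normSq_mul]
  simp only [expand, Finset.sum_sub_distrib, Finset.sum_add_distrib]
  rw [← Finset.sum_mul_sum, ha, hb]
  have h2 : ∑ x : Fin d, ∑ y : Fin d, Complex.normSq (a y) * Complex.normSq (b x) = 1 := by
    rw [Finset.sum_comm, ← Finset.sum_mul_sum, ha, hb, one_mul]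
  rw [h2]
  have h3 : ∑ x : Fin d, ∑ y : Fin d, 2 * ((a x * b y) * starRingEnd ℂ (a y * b x)).re
      = 2 * Complex.normSq (∑ i, a i * starRingEnd ℂ (b i)) := by
    simp only [← Finset.mul_sum, ← Complex.re_sum]
    congr 1
    have : ∑ x : Fin d, ∑ y : Fin d, (a x * b y) * starRingEnd ℂ (a y * b x)
        = (∑ i, a i * starRingEnd ℂ (b i)) * starRingEnd ℂ (∑ i, a i * starRingEnd ℂ (b i)) := by
      rw [map_sum, Finset.sum_mul_sum]
      congr 1; ext x; congr 1; ext y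
      simp only [_root_.map_mul, RingHomInvPair.comp_apply_eq, Complex.conj_conj]
      ring
    rw [this, Complex.mul_conj, Complex.ofReal_re]
  rw [h3]
  have := Complex.normSq_nonneg (∑ i, a i * starRingEnd ℂ (b i))
  nlinarith

private lemma sep_half_sum (d : ℕ) (a b : Fin d → ℂ)
    (ha : ∑ i, Complex.normSq (a i) = 1) (hb : ∑ j, Complex.normSq (b j) = 1) :
    ∑ i, ∑ j ∈ Finset.Ioi i, Complex.normSq (a i * b j - a j * b i) ≤ 1 := by
  set f : Fin d × Fin d → ℝ := fun p => Complex.normSq (a p.1 * b p.2 - a p.2 * b p.1) with hf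
  have hnonneg : ∀ p : Fin d × Fin d, 0 ≤ f p := fun p => Complex.normSq_nonneg _
  have hsymm : ∀ p : Fin d × Fin d, f p.swap = f p := by
    intro p
    simp only [hf, Prod.fst_swap, Prod.snd_swap]
    rw [← Complex.normSq_neg]
    congr 1
    ring
  set S : Finset (Fin d × Fin d) := Finset.univ.filter (fun p => p.1 < p.2) with hSdef
  set T : Finset (Fin d × Fin d) := Finset.univ.filter (fun p => p.2 < p.1) with hTdef
  have hS : ∑ i, ∑ j ∈ Finset.Ioi i, Complex.normSq (a i * b j - a j * b i)
      = ∑ p ∈ S, f p := by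
    rw [hSdef, Finset.sum_filter, ← Finset.univ_product_univ, Finset.sum_product]
    refine Finset.sum_congr rfl fun i _ => ?_
    rw [← Finset.filter_lt_eq_Ioi, Finset.sum_filter]
  have hT : ∑ p ∈ T, f p = ∑ p ∈ S, f p := by
    refine Finset.sum_nbij' (fun p => Prod.swap p) (fun p => Prod.swap p) ?_ ?_ ?_ ?_ ?_
    · intro p hp
      simp only [hTdef, hSdef, Finset.mem_filter, Finset.mem_univ, true_and,
        Prod.fst_swap, Prod.snd_swap] at hp ⊢
      exact hp
    · intro p hp
      simp only [hTdef, hSdef, Finset.mem_filter, Finset.mem_univ, true_and,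
        Prod.fst_swap, Prod.snd_swap] at hp ⊢
      exact hp
    · intro p _; exact Prod.swap_swap p
    · intro p _; exact Prod.swap_swap p
    · intro p _; exact (hsymm p).symm
  have hdisj : Disjoint S T := by
    rw [Finset.disjoint_left]
    intro p hp hq
    simp only [hSdef, hTdef, Finset.mem_filter] at hp hq
    exact absurd hq.2 (not_lt.mpr hp.2.le)
  have hunion : ∑ p ∈ S, f p + ∑ p ∈ T, f p = ∑ p ∈ S ∪ T, f p :=
    (Finset.sum_union hdisj).symm
  have hle : ∑ p ∈ S ∪ T, f p ≤ ∑ p : Fin d × Fin d, f p :=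
    Finset.sum_le_sum_of_subset_of_nonneg (Finset.subset_univ _) (fun p _ _ => hnonneg p)
  have hfull : ∑ p : Fin d × Fin d, f p ≤ 2 := by
    rw [← Finset.univ_product_univ, Finset.sum_product]
    exact sep_full_sum d a b ha hb
  rw [hS]
  linarith [hT ▸ hunion, hle, hfull]

end Helpers


/-- A state on `ℂᵐ ⊗ ℂⁿ` is separable if it is a convex combination of
pure product states. -/
def IsSeparableState {m n : ℕ} (ρ : Matrix (Fin m × Fin n) (Fin m × Fin n) ℂ) : Prop :=
  ∃ (N : ℕ) (p : Fin N → ℝ) (a : Fin N → Fin m → ℂ) (b : Fin N → Fin n → ℂ),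
    (∀ k, 0 ≤ p k) ∧ (∑ k, p k = 1) ∧
    (∀ k, ∑ i, ‖a k i‖ ^ 2 = 1) ∧
    (∀ k, ∑ j, ‖b k j‖ ^ 2 = 1) ∧
    ρ = ∑ k, (p k : ℂ) •
      Matrix.vecMulVec (fun x => a k x.1 * b k x.2) (star fun x => a k x.1 * b k x.2)

/-- The antisymmetric basis vector `|Ψ⁻_{ij}⟩ = (|ij⟩ - |ji⟩)/√2`. -/
noncomputable def psiMinus (d : ℕ) (i j : Fin d) : Fin d × Fin d → ℂ :=
  fun p => ((if p = (i, j) then 1 else 0) - (if p = (j, i) then 1 else 0)) /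
    ((Real.sqrt 2 : ℝ) : ℂ)

/-- The projection onto the antisymmetric subspace of `ℂᵈ ⊗ ℂᵈ`. -/
noncomputable def antisymProj (d : ℕ) : Matrix (Fin d × Fin d) (Fin d × Fin d) ℂ :=
  ∑ i, ∑ j ∈ Finset.Ioi i,
    Matrix.vecMulVec (psiMinus d i j) (star (psiMinus d i j))


section Helpers2

private lemma star_psi (d : ℕ) (i j : Fin d) : star (psiMinus d i j) = psiMinus d i j := by
  funext p
  simp [psiMinus, apply_ite, ← Complex.ofReal_one, ← Complex.ofReal_zero,
    ← Complex.ofReal_sub, ← Complex.ofReal_div]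

private lemma psi_dot (d : ℕ) (i j : Fin d) (v : Fin d × Fin d → ℂ) :
    star (psiMinus d i j) ⬝ᵥ v = (v (i, j) - v (j, i)) / ((Real.sqrt 2 : ℝ) : ℂ) := by
  rw [star_psi]
  simp only [dotProduct, psiMinus, div_mul_eq_mul_div, sub_mul, ite_mul, one_mul, zero_mul,
    ← Finset.sum_div, Finset.sum_sub_distrib]
  rw [Finset.sum_ite_eq' Finset.univ (i, j) v, Finset.sum_ite_eq' Finset.univ (j, i) v]
  simp

private lemma dot_psi (d : ℕ) (i j : Fin d) (v : Fin d × Fin d → ℂ) :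
    star v ⬝ᵥ psiMinus d i j
      = (starRingEnd ℂ (v (i, j)) - starRingEnd ℂ (v (j, i))) / ((Real.sqrt 2 : ℝ) : ℂ) := by
  have : star v ⬝ᵥ psiMinus d i j = starRingEnd ℂ (star (psiMinus d i j) ⬝ᵥ v) := by
    rw [star_psi]
    simp only [dotProduct, map_sum, _root_.map_mul, Pi.star_apply, Complex.star_def,
      RingHomInvPair.comp_apply_eq]
    refine Finset.sum_congr rfl fun p _ => ?_
    rw [mul_comm]
    congr 1
    simp [psiMinus, apply_ite, ← Complex.ofReal_one, ← Complex.ofReal_zero,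
      ← Complex.ofReal_sub, ← Complex.ofReal_div]
  rw [this, psi_dot]
  simp [map_sub]

private lemma trace_rank_one {ι : Type*} [Fintype ι] [DecidableEq ι] (v w : ι → ℂ) :
    (vecMulVec v (star v) * vecMulVec w (star w)).trace
      = (star v ⬝ᵥ w) * (star w ⬝ᵥ v) := by
  simp only [Matrix.trace, Matrix.diag, Matrix.mul_apply, vecMulVec_apply,
    dotProduct, Pi.star_apply]
  rw [Finset.sum_mul_sum]
  rw [Finset.sum_comm]
  congr 1; ext q; congr 1; ext p; ring

private lemma trace_term (d : ℕ) (v : Fin d × Fin d → ℂ) (i j : Fin d) :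
    ((vecMulVec v (star v) * vecMulVec (psiMinus d i j) (star (psiMinus d i j))).trace).re
      = Complex.normSq (v (i, j) - v (j, i)) / 2 := by
  rw [trace_rank_one, dot_psi, psi_dot]
  rw [div_mul_div_comm, ← Complex.ofReal_mul, Real.mul_self_sqrt (by norm_num)]
  rw [← map_sub, Complex.conj_mul']
  norm_num [Complex.div_re, Complex.normSq_ofNat, ← Complex.ofReal_pow, Complex.sq_norm]

end Helpers2

/-- A separable state `ρ` on `ℂᵈ ⊗ ℂᵈ` satisfies `Tr(ρ Π_A) ≤ 1/2`. -/
theorem stmt19 {d : ℕ} (ρ : Matrix (Fin d × Fin d) (Fin d × Fin d) ℂ)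
    (hρ : IsSeparableState ρ) :
    ((ρ * antisymProj d).trace).re ≤ 1 / 2 := by
  obtain ⟨N, p, a, b, hp, hpsum, ha, hb, hrho⟩ := hρ
  have ha' : ∀ k, ∑ i, Complex.normSq (a k i) = 1 := by
    intro k; rw [← ha k]; exact Finset.sum_congr rfl fun i _ => (Complex.sq_norm _).symm
  have hb' : ∀ k, ∑ j, Complex.normSq (b k j) = 1 := by
    intro k; rw [← hb k]; exact Finset.sum_congr rfl fun j _ => (Complex.sq_norm _).symm
  subst hrho
  rw [Finset.sum_mul, Matrix.trace_sum, Complex.re_sum]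
  have hterm : ∀ k, ((((p k : ℂ) • vecMulVec (fun x : Fin d × Fin d => a k x.1 * b k x.2)
      (star fun x : Fin d × Fin d => a k x.1 * b k x.2)) * antisymProj d).trace).re ≤ p k * (1 / 2) := by
    intro k
    rw [smul_mul_assoc, Matrix.trace_smul]
    have htr : ((vecMulVec (fun x : Fin d × Fin d => a k x.1 * b k x.2)
        (star fun x : Fin d × Fin d => a k x.1 * b k x.2) * antisymProj d).trace).re ≤ 1 / 2 := by
      simp only [antisymProj]
      simp only [Finset.mul_sum, Matrix.trace_sum, Complex.re_sum]
      have : ∀ i : Fin d, ∀ j ∈ Finset.Ioi i,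
          ((vecMulVec (fun x : Fin d × Fin d => a k x.1 * b k x.2)
            (star fun x : Fin d × Fin d => a k x.1 * b k x.2)
            * vecMulVec (psiMinus d i j) (star (psiMinus d i j))).trace).re
          = Complex.normSq (a k i * b k j - a k j * b k i) / 2 := by
        intro i j _
        exact trace_term d (fun x => a k x.1 * b k x.2) i j
      calc ∑ i, ∑ j ∈ Finset.Ioi i, ((vecMulVec (fun x : Fin d × Fin d => a k x.1 * b k x.2)
              (star fun x : Fin d × Fin d => a k x.1 * b k x.2)
              * vecMulVec (psiMinus d i j) (star (psiMinus d i j))).trace).re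
          = ∑ i, ∑ j ∈ Finset.Ioi i, Complex.normSq (a k i * b k j - a k j * b k i) / 2 := by
            refine Finset.sum_congr rfl fun i _ => Finset.sum_congr rfl fun j hj => this i j hj
        _ = (∑ i, ∑ j ∈ Finset.Ioi i, Complex.normSq (a k i * b k j - a k j * b k i)) / 2 := by
            simp [Finset.sum_div]
        _ ≤ 1 / 2 := by
            have := sep_half_sum d (a k) (b k) (ha' k) (hb' k)
            linarith
    calc (((p k : ℂ) • (vecMulVec (fun x : Fin d × Fin d => a k x.1 * b k x.2)
          (star fun x : Fin d × Fin d => a k x.1 * b k x.2) * antisymProj d).trace)).re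
        = p k * ((vecMulVec (fun x : Fin d × Fin d => a k x.1 * b k x.2)
            (star fun x : Fin d × Fin d => a k x.1 * b k x.2) * antisymProj d).trace).re := by
          rw [smul_eq_mul]; simp [Complex.mul_re]
      _ ≤ p k * (1 / 2) := mul_le_mul_of_nonneg_left htr (hp k)
  calc ∑ k, ((((p k : ℂ) • vecMulVec (fun x : Fin d × Fin d => a k x.1 * b k x.2)
        (star fun x : Fin d × Fin d => a k x.1 * b k x.2)) * antisymProj d).trace).re
      ≤ ∑ k, p k * (1 / 2) := Finset.sum_le_sum fun k _ => hterm k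
    _ = 1 / 2 := by rw [← Finset.sum_mul, hpsum, one_mul]
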